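/- arXiv:0911.1626 — 6 statements merged into one kernel-verified Lean document; each statement's English description precedes it below -/
import Mathlib

section
/- Let (V,d) be a finite metric space with doubling constant λ, let η be a natural number and r > 0. Then there exists a partition of V into nonempty parts S_1, …, S_m together with designated leaders v_i ∈ S_i such that: (i) S_i is contained in the ball of radius 2^{-η-1}·r around v_i (hence diam S_i ≤ 2^{-η}·r); (ii) the leaders are pairwise at distance strictly greater than 2^{-η-1}·r; and (iii) for every v ∈ V the ball of radius r around v intersects at most λ^{3+η} of the parts S_i. -/
/-!
Choose as leaders a maximal `2^(-η-1) r`-separated set `N` and send every point to a leader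
within distance `2^(-η-1) r`; the fibres form the partition. A ball of radius `r` only meets
parts whose leaders lie in the concentric ball of radius `2r = 2^(3+η) · 2^(-η-2) r`. Iterating
the doubling property covers that ball by `λ^(3+η)` balls of radius `2^(-η-2) r`, and each of
them contains at most one leader, since leaders are more than twice that radius apart.
-/

open Metric Set
open scoped NNReal

namespace Metric

def HasDoublingConstant (V : Type*) [PseudoMetricSpace V] (lam : ℕ) : Prop :=
  ∀ (x : V) (s : ℝ), 0 < s → ∃ C : Finset V, C.card ≤ lam ∧
    closedBall x (2 * s) ⊆ ⋃ c ∈ C, closedBall c s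

section Doubling

variable {V : Type*} [PseudoMetricSpace V] {lam : ℕ}

theorem HasDoublingConstant.exists_finset_cover_closedBall_two_pow_mul
    (h : HasDoublingConstant V lam) (k : ℕ) (x : V) {s : ℝ} (hs : 0 < s) :
    ∃ C : Finset V, C.card ≤ lam ^ k ∧ closedBall x (2 ^ k * s) ⊆ ⋃ c ∈ C, closedBall c s := by
  classical
  induction k generalizing x with
  | zero => exact ⟨{x}, by simp, by simp⟩
  | succ k ih =>
    obtain ⟨C, hC, hcov⟩ := h x (2 ^ k * s) (by positivity)
    choose D hD hDcov using ih
    refine ⟨C.biUnion D, ?_, fun y hy => ?_⟩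
    · calc (C.biUnion D).card ≤ C.card * lam ^ k :=
            Finset.card_biUnion_le_card_mul _ _ _ fun c _ => hD c
        _ ≤ lam ^ (k + 1) := by rw [pow_succ']; exact Nat.mul_le_mul_right _ hC
    · rw [pow_succ', mul_assoc] at hy
      obtain ⟨c, hc, hyc⟩ := mem_iUnion₂.1 (hcov hy)
      obtain ⟨d, hd, hyd⟩ := mem_iUnion₂.1 (hDcov c hyc)
      exact mem_iUnion₂.2 ⟨d, Finset.mem_biUnion.2 ⟨c, hc, hd⟩, hyd⟩

theorem HasDoublingConstant.externalCoveringNumber_closedBall_le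
    (h : HasDoublingConstant V lam) (k : ℕ) (x : V) {ε : ℝ≥0} (hε : 0 < ε) :
    externalCoveringNumber ε (closedBall x (2 ^ k * ε)) ≤ lam ^ k := by
  obtain ⟨C, hC, hcov⟩ := h.exists_finset_cover_closedBall_two_pow_mul k x (s := ε) hε
  have hC' : IsCover ε (closedBall x (2 ^ k * ε)) C :=
    isCover_iff_subset_iUnion_closedBall.2 (by simpa using hcov)
  calc externalCoveringNumber ε (closedBall x (2 ^ k * ε)) ≤ (C : Set V).encard :=
        hC'.externalCoveringNumber_le_encard
    _ = C.card := encard_coe_eq_coe_finsetCard C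
    _ ≤ lam ^ k := by exact_mod_cast hC

theorem HasDoublingConstant.encard_inter_closedBall_le (h : HasDoublingConstant V lam)
    {N : Set V} {ε : ℝ≥0} (hε : 0 < ε) (hN : IsSeparated (2 * ε : ℝ≥0) N) (k : ℕ) (x : V) :
    (N ∩ closedBall x (2 ^ k * ε)).encard ≤ lam ^ k :=
  calc (N ∩ closedBall x (2 ^ k * ε)).encard
      ≤ packingNumber (2 * ε) (closedBall x (2 ^ k * ε)) :=
        (hN.subset inter_subset_left).encard_le_packingNumber inter_subset_right
    _ ≤ externalCoveringNumber ε (closedBall x (2 ^ k * ε)) :=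
        packingNumber_two_mul_le_externalCoveringNumber _ _
    _ ≤ lam ^ k := h.externalCoveringNumber_closedBall_le k x hε

end Doubling

theorem exists_isSeparated_isCover_univ {X : Type*} [PseudoEMetricSpace X] [Finite X] (ε : ℝ≥0) :
    ∃ N : Set X, IsSeparated ε N ∧ IsCover ε univ N := by
  obtain ⟨N, -, hN⟩ := Finite.exists_le_maximal
    (p := fun N : Set X => N ⊆ univ ∧ IsSeparated ε N) ⟨subset_univ ∅, .empty⟩
  exact ⟨N, hN.prop.2, .of_maximal_isSeparated hN⟩

section Partition

variable {V : Type*} [PseudoMetricSpace V] {N : Set V} {δ : ℝ≥0}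

theorem isSeparated_iff_pairwise_lt_dist :
    IsSeparated δ N ↔ N.Pairwise fun a b => (δ : ℝ) < dist a b := by
  simp only [IsSeparated, ← not_le, edist_le_coe, ← NNReal.coe_le_coe, coe_nndist]

theorem IsSeparated.exists_retraction_of_isCover (hsep : IsSeparated δ N)
    (hcov : IsCover δ univ N) :
    ∃ f : V → N, (∀ x, dist x (f x : V) ≤ δ) ∧ ∀ n : N, f n = n := by
  choose f hfN hf using fun x => hcov (mem_univ x)
  have hf' : ∀ x, edist x (f x) ≤ δ := hf
  refine ⟨fun x => ⟨f x, hfN x⟩, fun x => ?_, fun n => Subtype.ext ?_⟩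
  · simpa only [edist_le_coe, ← NNReal.coe_le_coe, coe_nndist] using hf' x
  · by_contra hne
    exact (hsep n.2 (hfN n) (Ne.symm hne)).not_ge (hf' n)

theorem IsSeparated.exists_fin_partition_of_isCover [Finite V] (hsep : IsSeparated δ N)
    (hcov : IsCover δ univ N) (r : ℝ) :
    ∃ (m : ℕ) (S : Fin m → Set V) (v : Fin m → V),
      (∀ i, v i ∈ S i) ∧
      (∀ i j, i ≠ j → Disjoint (S i) (S j)) ∧
      (⋃ i, S i) = univ ∧
      (∀ i, S i ⊆ closedBall (v i) δ) ∧
      (∀ i j, i ≠ j → (δ : ℝ) < dist (v i) (v j)) ∧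
      ∀ x, {i | (ball x r ∩ S i).Nonempty}.ncard ≤ (N ∩ closedBall x (r + δ)).ncard := by
  obtain ⟨f, hfd, hfN⟩ := hsep.exists_retraction_of_isCover hcov
  let e := (Finite.equivFin N).symm
  refine ⟨Nat.card N, fun i => f ⁻¹' {e i}, fun i => e i, fun i => hfN (e i),
    fun i j hij => ?_,
    eq_univ_of_forall fun x => mem_iUnion.2 ⟨e.symm (f x), (e.apply_symm_apply _).symm⟩,
    fun i x hx => ?_, fun i j hij => ?_, fun x => ?_⟩
  · exact (disjoint_singleton.2 (e.injective.ne hij)).preimage f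
  · rw [mem_preimage, mem_singleton_iff] at hx
    simpa only [mem_closedBall, hx] using hfd x
  · exact isSeparated_iff_pairwise_lt_dist.1 hsep (e i).2 (e j).2
      (Subtype.coe_injective.ne (e.injective.ne hij))
  · refine ncard_le_ncard_of_injOn (fun i => e i) (fun i ⟨y, hyx, hyi⟩ => ⟨(e i).2, ?_⟩)
      (Subtype.coe_injective.comp e.injective).injOn
    rw [mem_preimage, mem_singleton_iff] at hyi
    rw [mem_closedBall, ← hyi, dist_comm]
    calc dist x (f y) ≤ dist x y + dist y (f y) := dist_triangle _ _ _
      _ ≤ r + δ := add_le_add (mem_ball'.1 hyx).le (hfd y)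

end Partition

end Metric

/-- Lemma 2 of the paper: a `(2^(-η), lam^(3+η))` partition scheme for a finite doubling
metric space.  For every `r > 0` there is a partition of `V` into parts `S i` with
leaders `v i ∈ S i` such that each part lies in the closed ball of radius `2^(-η-1)*r`
around its leader, the leaders are pairwise at distance `> 2^(-η-1)*r`, and every ball
of radius `r` intersects at most `lam^(3+η)` parts. -/
theorem doubling_partition_scheme {V : Type*} [MetricSpace V] [Fintype V] (lam : ℕ)
    (hdb : ∀ (x : V) (s : ℝ), 0 < s → ∃ C : Finset V, C.card ≤ lam ∧
      Metric.closedBall x (2 * s) ⊆ ⋃ c ∈ C, Metric.closedBall c s)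
    (η : ℕ) (r : ℝ) (hr : 0 < r) :
    ∃ (m : ℕ) (S : Fin m → Set V) (v : Fin m → V),
      (∀ i, v i ∈ S i) ∧
      (∀ i j, i ≠ j → Disjoint (S i) (S j)) ∧
      (⋃ i, S i) = Set.univ ∧
      (∀ i, S i ⊆ Metric.closedBall (v i) ((2 : ℝ) ^ (-(η : ℤ) - 1) * r)) ∧
      (∀ i j, i ≠ j → (2 : ℝ) ^ (-(η : ℤ) - 1) * r < dist (v i) (v j)) ∧
      (∀ x : V, {i : Fin m | (Metric.ball x r ∩ S i).Nonempty}.ncard ≤ lam ^ (3 + η)) := by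
  obtain ⟨ε, hε⟩ : ∃ ε : ℝ≥0, (ε : ℝ) = 2 ^ (-(η : ℤ) - 2) * r := ⟨⟨_, by positivity⟩, rfl⟩
  have hε_pos : 0 < ε := by rw [← NNReal.coe_pos, hε]; positivity
  have h2ε : ((2 * ε : ℝ≥0) : ℝ) = 2 ^ (-(η : ℤ) - 1) * r := by
    rw [NNReal.coe_mul, hε, NNReal.coe_ofNat, ← mul_assoc, ← zpow_one_add₀ two_ne_zero]
    ring_nf
  have hball : r + 2 ^ (-(η : ℤ) - 1) * r ≤ 2 ^ (3 + η) * ε := by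
    have hle : (2 : ℝ) ^ (-(η : ℤ) - 1) ≤ 1 := zpow_le_one_of_nonpos₀ one_le_two (by omega)
    have h2r : (2 : ℝ) ^ (3 + η) * ε = 2 * r := by
      rw [hε, ← mul_assoc, ← zpow_natCast, ← zpow_add₀ two_ne_zero]
      push_cast
      ring_nf
      rw [zpow_one, mul_comm]
    nlinarith
  obtain ⟨N, hsep, hcov⟩ := exists_isSeparated_isCover_univ (X := V) (2 * ε)
  obtain ⟨m, S, v, hv, hdisj, hunion, hsub, hlead, hcount⟩ :=
    hsep.exists_fin_partition_of_isCover hcov r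
  rw [h2ε] at hsub hlead hcount
  refine ⟨m, S, v, hv, hdisj, hunion, hsub, hlead, fun x => (hcount x).trans ?_⟩
  have hdoubling : HasDoublingConstant V lam := hdb
  have hpack := hdoubling.encard_inter_closedBall_le hε_pos hsep (3 + η) x
  calc (N ∩ closedBall x (r + 2 ^ (-(η : ℤ) - 1) * r)).ncard
      ≤ (N ∩ closedBall x (2 ^ (3 + η) * ε)).ncard :=
        ncard_le_ncard (inter_subset_inter_right _ (closedBall_subset_closedBall hball))
    _ ≤ lam ^ (3 + η) := by
        rw [← (toFinite _).cast_ncard_eq] at hpack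
        exact_mod_cast hpack
end

section
/- Let (V,d) be a metric space with doubling constant λ, let η be a natural number, let τ > 1 satisfy 2τ·2^{-η}/(τ−1) ≤ 1, and let r > 0. Let P be a partition of V such that each part S ∈ P has a designated leader ℓ(S) ∈ S with S contained in the ball of radius (τ·2^{-η}/(τ−1))·r around ℓ(S), and such that leaders of distinct parts are at distance strictly greater than 2^{-η}·r. Then for every part S ∈ P, the number of parts S' ∈ P such that there exist v ∈ S and v' ∈ S' with d(v,v') < r is at most λ^{3+η}. -/
/-!
If `S` knows `S'`, then by the triangle inequality and `2τ2^(-η)/(τ-1) ≤ 1` the leader `ℓ S'` lies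
within `2r` of `ℓ S`. Iterating the doubling property `3 + η` times covers that ball by `λ^(3+η)`
balls of radius `2^(-η) r / 4`, and each of them contains at most one leader, since leaders are
more than `2^(-η) r` apart.
-/

open Metric Set

theorem exists_finset_card_le_pow_closedBall_subset {V : Type*} [PseudoMetricSpace V] {lam : ℕ}
    (hdb : ∀ (x : V) (s : ℝ), 0 < s → ∃ C : Finset V, C.card ≤ lam ∧
      closedBall x (2 * s) ⊆ ⋃ c ∈ C, closedBall c s)
    (n : ℕ) (x : V) {s : ℝ} (hs : 0 < s) :
    ∃ C : Finset V, C.card ≤ lam ^ n ∧ closedBall x (2 ^ n * s) ⊆ ⋃ c ∈ C, closedBall c s := by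
  classical
  induction n generalizing x with
  | zero => exact ⟨{x}, by simp, by simp⟩
  | succ n ih =>
    obtain ⟨C₀, hC₀, hcov₀⟩ := hdb x (2 ^ n * s) (by positivity)
    choose D hD hcovD using ih
    refine ⟨C₀.biUnion D, ?_, ?_⟩
    · calc (C₀.biUnion D).card ≤ ∑ c ∈ C₀, (D c).card := Finset.card_biUnion_le
        _ ≤ C₀.card * lam ^ n := Finset.sum_le_card_nsmul _ _ _ fun c _ => hD c
        _ ≤ lam ^ (n + 1) := by rw [pow_succ']; exact Nat.mul_le_mul_right _ hC₀
    · intro y hy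
      rw [pow_succ', mul_assoc] at hy
      obtain ⟨c, hc, hyc⟩ := mem_iUnion₂.mp (hcov₀ hy)
      obtain ⟨d, hd, hyd⟩ := mem_iUnion₂.mp (hcovD c hyc)
      exact mem_iUnion₂.mpr ⟨d, Finset.mem_biUnion.mpr ⟨c, hc, hd⟩, hyd⟩

theorem finite_and_ncard_le_of_pairwise_lt_dist {ι V : Type*} [PseudoMetricSpace V] {f : ι → V}
    {K : Set ι} {C : Finset V} {s : ℝ} (hcov : ∀ i ∈ K, f i ∈ ⋃ c ∈ C, closedBall c s)
    (hsep : K.Pairwise fun i j => 2 * s < dist (f i) (f j)) :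
    K.Finite ∧ K.ncard ≤ C.card := by
  rcases K.eq_empty_or_nonempty with rfl | ⟨i₀, -⟩
  · simp
  have : Nonempty V := ⟨f i₀⟩
  choose! g hgC hg using fun i hi => mem_iUnion₂.mp (hcov i hi)
  have hinj : InjOn g K := by
    intro i hi j hj hgij
    by_contra hne
    have hi' := mem_closedBall.mp (hg i hi)
    have hj' := mem_closedBall'.mp (hg j hj)
    rw [hgij] at hi'
    linarith [hsep hi hj hne, dist_triangle (f i) (g j) (f j)]
  exact ⟨.of_injOn hgC hinj C.finite_toSet,
    (ncard_le_ncard_of_injOn g hgC hinj).trans_eq (ncard_coe_finset C)⟩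

theorem partition_knows_bound_general {V : Type*} [MetricSpace V] (lam : ℕ)
    (hdb : ∀ (x : V) (s : ℝ), 0 < s → ∃ C : Finset V, C.card ≤ lam ∧
      Metric.closedBall x (2 * s) ⊆ ⋃ c ∈ C, Metric.closedBall c s)
    (η : ℕ) (τ : ℝ)
    (hτη : 2 * τ * (2 : ℝ) ^ (-(η : ℤ)) / (τ - 1) ≤ 1)
    (r : ℝ) (hr : 0 < r)
    (P : Set (Set V))
    (ℓ : Set V → V)
    (hball : ∀ S ∈ P, S ⊆ Metric.closedBall (ℓ S) ((τ * (2 : ℝ) ^ (-(η : ℤ)) / (τ - 1)) * r))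
    (hsep : ∀ S ∈ P, ∀ S' ∈ P, S ≠ S' → (2 : ℝ) ^ (-(η : ℤ)) * r < dist (ℓ S) (ℓ S')) :
    ∀ S ∈ P,
      {S' | S' ∈ P ∧ ∃ v ∈ S, ∃ v' ∈ S', dist v v' < r}.Finite ∧
      {S' | S' ∈ P ∧ ∃ v ∈ S, ∃ v' ∈ S', dist v v' < r}.ncard ≤ lam ^ (3 + η) := by
  intro S hS
  set R := τ * (2 : ℝ) ^ (-(η : ℤ)) / (τ - 1) * r
  set s := (2 : ℝ) ^ (-(η : ℤ)) * r / 4 with hs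
  have h2R : 2 * R ≤ r := by
    calc 2 * R = 2 * τ * (2 : ℝ) ^ (-(η : ℤ)) / (τ - 1) * r := by ring
      _ ≤ r := mul_le_of_le_one_left hr.le hτη
  have hscale : (2 : ℝ) ^ (3 + η) * s = 2 * r := by
    rw [hs, zpow_neg, zpow_natCast, pow_add]
    field_simp
    norm_num
  obtain ⟨C, hC, hcov⟩ := exists_finset_card_le_pow_closedBall_subset hdb (3 + η) (ℓ S)
    (show 0 < s by positivity)
  refine (finite_and_ncard_le_of_pairwise_lt_dist (f := ℓ) (s := s) ?_ ?_).imp_right (·.trans hC)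
  · rintro S' ⟨hS', v, hv, v', hv', hvv'⟩
    apply hcov
    rw [mem_closedBall, hscale]
    calc dist (ℓ S') (ℓ S) ≤ dist (ℓ S') v' + dist v' v + dist v (ℓ S) := dist_triangle4 ..
      _ ≤ R + r + R := by
        gcongr
        · exact mem_closedBall'.mp (hball S' hS' hv')
        · exact (dist_comm v' v).trans_lt hvv' |>.le
        · exact mem_closedBall.mp (hball S hS hv)
      _ ≤ 2 * r := by linarith
  · rintro S' ⟨hS', -⟩ S'' ⟨hS'', -⟩ hne
    have : 0 < (2 : ℝ) ^ (-(η : ℤ)) * r := by positivity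
    calc 2 * s < (2 : ℝ) ^ (-(η : ℤ)) * r := by linarith [hs]
      _ < dist (ℓ S') (ℓ S'') := hsep S' hS' S'' hS'' hne

/-- Lemma `doubknow`: in a metric space with doubling constant `lam`, given a partition
`P` of the space in which every part `S` lies in the closed ball of radius
`(τ*2^(-η)/(τ-1))*r` around its leader `ℓ S` and leaders of distinct parts are at
distance `> 2^(-η)*r`, every part `S` "knows" (i.e. some point of `S` is at distance
`< r` from some point of) at most `lam^(3+η)` parts. -/
theorem partition_knows_bound {V : Type*} [MetricSpace V] (lam : ℕ)
    (hdb : ∀ (x : V) (s : ℝ), 0 < s → ∃ C : Finset V, C.card ≤ lam ∧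
      Metric.closedBall x (2 * s) ⊆ ⋃ c ∈ C, Metric.closedBall c s)
    (η : ℕ) (τ : ℝ) (hτ : 1 < τ)
    (hτη : 2 * τ * (2 : ℝ) ^ (-(η : ℤ)) / (τ - 1) ≤ 1)
    (r : ℝ) (hr : 0 < r)
    (P : Set (Set V)) (hpart : Setoid.IsPartition P)
    (ℓ : Set V → V)
    (hmem : ∀ S ∈ P, ℓ S ∈ S)
    (hball : ∀ S ∈ P, S ⊆ Metric.closedBall (ℓ S) ((τ * (2 : ℝ) ^ (-(η : ℤ)) / (τ - 1)) * r))
    (hsep : ∀ S ∈ P, ∀ S' ∈ P, S ≠ S' → (2 : ℝ) ^ (-(η : ℤ)) * r < dist (ℓ S) (ℓ S')) :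
    ∀ S ∈ P,
      {S' | S' ∈ P ∧ ∃ v ∈ S, ∃ v' ∈ S', dist v v' < r}.Finite ∧
      {S' | S' ∈ P ∧ ∃ v ∈ S, ∃ v' ∈ S', dist v v' < r}.ncard ≤ lam ^ (3 + η) :=
  partition_knows_bound_general lam hdb η τ hτη r hr P ℓ hball hsep
end

section
/- Let (V,d) be a metric space, let τ > 1, let η be a natural number, let r_j > 0 and set c = τ·2^{-η}/(τ−1) and r_{j+1} = τ·r_j. Let S_1, S_1* ⊆ V with v ∈ S_1, v* ∈ S_1*, and suppose d(u, u*) ≥ r_j for all u ∈ S_1 and u* ∈ S_1* (the sets do not know each other at scale r_j). Suppose further that there exist points u, u*, l, l* ∈ V with d(v, l) < c·r_{j+1}, d(u, l) < c·r_{j+1}, d(u*, l*) < c·r_{j+1}, d(v*, l*) < c·r_{j+1}, and d(u, u*) < r_{j+1}. Then r_j ≤ d(v, v*) < (1 + 4τ·2^{-η}/(τ−1))·τ·r_j. -/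
lemma dist_lt_add_four_mul_of_near_leaders {V : Type*} [PseudoMetricSpace V] {v vs u us l ls : V}
    {r ρ : ℝ} (hvl : dist v l < ρ) (hul : dist u l < ρ) (husls : dist us ls < ρ)
    (hvsls : dist vs ls < ρ) (huus : dist u us < r) :
    dist v vs < r + 4 * ρ := by
  have hchain : dist v vs ≤ dist v l + dist l u + dist u us + dist us vs := by
    linarith [dist_triangle4 v l u us, dist_triangle v us vs]
  linarith [dist_triangle us ls vs, dist_comm l u, dist_comm ls vs]

theorem distance_approximation_general {V : Type*} [MetricSpace V] (τ : ℝ) (η : ℕ)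
    (rj : ℝ)
    (c : ℝ) (hc : c = τ * (2 : ℝ) ^ (-(η : ℤ)) / (τ - 1))
    (S1 S1s : Set V) (v vs : V) (hv : v ∈ S1) (hvs : vs ∈ S1s)
    (hfar : ∀ u ∈ S1, ∀ us ∈ S1s, rj ≤ dist u us)
    (u us l ls : V)
    (h1 : dist v l < c * (τ * rj)) (h2 : dist u l < c * (τ * rj))
    (h3 : dist us ls < c * (τ * rj)) (h4 : dist vs ls < c * (τ * rj))
    (h5 : dist u us < τ * rj) :
    rj ≤ dist v vs ∧
      dist v vs < (1 + 4 * τ * (2 : ℝ) ^ (-(η : ℤ)) / (τ - 1)) * τ * rj := by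
  refine ⟨hfar v hv vs hvs, ?_⟩
  calc dist v vs < τ * rj + 4 * (c * (τ * rj)) :=
        dist_lt_add_four_mul_of_near_leaders h1 h2 h3 h4 h5
    _ = (1 + 4 * τ * (2 : ℝ) ^ (-(η : ℤ)) / (τ - 1)) * τ * rj := by rw [hc]; ring

/-- Lemma `stretchlimit` (distance approximation): if the sets `S1 ∋ v` and `S1* ∋ v*`
do not know each other at scale `r_j` (all pairs at distance `≥ r_j`), while at scale
`r_{j+1} = τ*r_j` there are points `u, u*` at distance `< r_{j+1}` whose leaders `l, l*`
are within `c*r_{j+1}` of `v, u` resp. `u*, v*` (where `c = τ*2^(-η)/(τ-1)`), then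
`r_j ≤ d(v,v*) < (1 + 4τ*2^(-η)/(τ-1)) * τ * r_j`. -/
theorem distance_approximation {V : Type*} [MetricSpace V] (τ : ℝ) (hτ : 1 < τ) (η : ℕ)
    (rj : ℝ) (hrj : 0 < rj)
    (c : ℝ) (hc : c = τ * (2 : ℝ) ^ (-(η : ℤ)) / (τ - 1))
    (S1 S1s : Set V) (v vs : V) (hv : v ∈ S1) (hvs : vs ∈ S1s)
    (hfar : ∀ u ∈ S1, ∀ us ∈ S1s, rj ≤ dist u us)
    (u us l ls : V)
    (h1 : dist v l < c * (τ * rj)) (h2 : dist u l < c * (τ * rj))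
    (h3 : dist us ls < c * (τ * rj)) (h4 : dist vs ls < c * (τ * rj))
    (h5 : dist u us < τ * rj) :
    rj ≤ dist v vs ∧
      dist v vs < (1 + 4 * τ * (2 : ℝ) ^ (-(η : ℤ)) / (τ - 1)) * τ * rj :=
  distance_approximation_general τ η rj c hc S1 S1s v vs hv hvs hfar u us l ls h1 h2 h3 h4 h5
end

section
/- Let (X,d) be a finite metric space, let r ∈ X, let τ > 1, r_0 > 0, D ≥ 1 be reals, and let ℓ : X → ℤ be a function such that for every x ∈ X with x ≠ r, τ^{ℓ(x)}·r_0 ≤ d(x,r) ≤ D·τ^{ℓ(x)}·r_0. Call a tree on the vertex set X 'layered' if every edge of it is either incident to r or joins two vertices x, y with ℓ(x) = ℓ(y). Then for every spanning tree T of X (a connected acyclic simple graph with vertex set X) there exists a layered spanning tree T_L of X with w(T_L) ≤ 2·m·(1+D)·w(T), where m = ⌈log_τ(1+D)⌉ and the weight w of a tree is the sum of d(x,y) over its edges {x,y}. -/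
/-!
Walk around `T` (a depth-first tour from `r`) to get an ordering of `X \ {r}` whose path from
`r` has length at most `2 w(T)`; by the triangle inequality, the same bound holds for the path
through any subsequence. Split the vertices into `m` classes by the residue of their layer
mod `m`, and join each vertex to its predecessor `y` along the path through its class if `y` is
in the same layer, and to `r` otherwise. Layers of one class that differ are at least `m` apart,
so `τ^m ≥ 1 + D` forces `d(x, r) ≤ (1 + D) d(x, y)` in the second case. Each class therefore
costs at most `(1 + D) · 2 w(T)`, and predecessors come earlier in the ordering, so the result
is a tree.
-/

/-- The weight of a graph on a finite metric space: the sum of the distances over its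
edges. -/
noncomputable def treeWeight {X : Type*} [MetricSpace X] [Fintype X]
    (T : SimpleGraph X) : ℝ :=
  ∑ᶠ e ∈ T.edgeSet, Sym2.lift ⟨fun x y => dist x y, fun x y => dist_comm x y⟩ e

namespace List

theorem Nodup.idxOf_lt_idxOf_of_pair_sublist {α : Type*} [DecidableEq α] {l : List α}
    (hl : l.Nodup) {a b : α} (h : [a, b] <+ l) : l.idxOf a < l.idxOf b := by
  induction l with
  | nil => simp at h
  | cons c l ih =>
    have hc : c ∉ l := (nodup_cons.1 hl).1
    cases h with
    | cons _ h =>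
      rw [idxOf_cons_ne _ (ne_of_mem_of_not_mem (h.subset (by simp)) hc).symm,
        idxOf_cons_ne _ (ne_of_mem_of_not_mem (h.subset (by simp)) hc).symm]
      exact Nat.succ_lt_succ (ih hl.of_cons h)
    | cons_cons _ h =>
      rw [idxOf_cons_self, idxOf_cons_ne _ (ne_of_mem_of_not_mem (h.subset (by simp)) hc).symm]
      exact Nat.succ_pos _

end List

theorem Real.le_zpow_ceil_logb {b x : ℝ} (hb : 1 < b) (hx : 0 < x) : x ≤ b ^ ⌈Real.logb b x⌉ :=
  calc x = b ^ Real.logb b x := (Real.rpow_logb (by linarith) hb.ne' hx).symm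
    _ ≤ b ^ (⌈Real.logb b x⌉ : ℝ) := Real.rpow_le_rpow_of_exponent_le hb.le (Int.le_ceil _)
    _ = b ^ ⌈Real.logb b x⌉ := Real.rpow_intCast b _

theorem Int.add_le_or_add_le_of_dvd_sub {a b m : ℤ} (h : m ∣ a - b) (hab : a ≠ b) :
    a + m ≤ b ∨ b + m ≤ a := by
  rcases hab.lt_or_gt with hlt | hgt
  · left; linarith [Int.le_of_dvd (sub_pos.2 hlt) (dvd_sub_comm.1 h)]
  · right; linarith [Int.le_of_dvd (sub_pos.2 hgt) h]

namespace LayeredSpanningTree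

open Finset
open scoped List

variable {X : Type*}

section Path

variable [DecidableEq X]

def pathPred (a : X) : List X → X → X
  | [], _ => a
  | b :: l, x => if b = x then a else pathPred b l x

theorem pathPred_pair_sublist {a x : X} {l : List X} (hx : x ∈ l) :
    [pathPred a l x, x] <+ a :: l := by
  induction l generalizing a with
  | nil => simp at hx
  | cons b l ih =>
    by_cases hbx : b = x
    · subst hbx
      simp [pathPred]
    · rw [pathPred, if_neg hbx]
      exact (ih (List.mem_of_ne_of_mem (Ne.symm hbx) hx)).cons a

end Path

section Metric

variable [MetricSpace X]

noncomputable def pathLength : X → List X → ℝ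
  | _, [] => 0
  | a, b :: l => dist a b + pathLength b l

@[simp] theorem pathLength_nil (a : X) : pathLength a [] = 0 := rfl

@[simp] theorem pathLength_cons (a b : X) (l : List X) :
    pathLength a (b :: l) = dist a b + pathLength b l := rfl

theorem pathLength_nonneg (a : X) (l : List X) : 0 ≤ pathLength a l := by
  induction l generalizing a with
  | nil => simp
  | cons b l ih => exact add_nonneg dist_nonneg (ih b)

theorem pathLength_le_pathLength_cons (a b : X) (l : List X) :
    pathLength a l ≤ pathLength a (b :: l) := by
  cases l with
  | nil => exact pathLength_nonneg a _
  | cons c l =>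
    simp only [pathLength_cons]
    linarith [dist_triangle a b c]

theorem pathLength_mono {l₁ l₂ : List X} (h : l₁ <+ l₂) (a : X) :
    pathLength a l₁ ≤ pathLength a l₂ := by
  induction h generalizing a with
  | slnil => exact le_rfl
  | cons b _ ih => exact (ih a).trans (pathLength_le_pathLength_cons a b _)
  | cons_cons b _ ih => simpa using ih b

theorem sum_dist_pathPred [DecidableEq X] {l : List X} (hl : l.Nodup) (a : X) :
    ∑ x ∈ l.toFinset, dist (pathPred a l x) x = pathLength a l := by
  induction l generalizing a with
  | nil => simp
  | cons b l ih =>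
    have hb : b ∉ l := (List.nodup_cons.1 hl).1
    have htail : ∀ x ∈ l.toFinset, dist (pathPred a (b :: l) x) x = dist (pathPred b l x) x :=
      fun x hx => by rw [pathPred, if_neg (ne_of_mem_of_not_mem (List.mem_toFinset.1 hx) hb).symm]
    rw [List.toFinset_cons, sum_insert (by simpa using hb), sum_congr rfl htail, ih hl.of_cons]
    simp [pathPred]

theorem pathLength_detour (a x y : X) (A B : List X) :
    pathLength a (A ++ y :: x :: y :: B) = pathLength a (A ++ y :: B) + 2 * dist x y := by
  induction A generalizing a with
  | nil => simp only [List.nil_append, pathLength_cons, dist_comm y x]; ring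
  | cons c A ih => simp only [List.cons_append, pathLength_cons, ih]; ring

theorem exists_detour {a y : X} {L : List X} (hy : y ∈ a :: L) (x : X) :
    ∃ L' : List X, a :: L ⊆ a :: L' ∧ x ∈ L' ∧
      pathLength a L' = pathLength a L + 2 * dist x y := by
  rcases List.mem_cons.1 hy with rfl | hyL
  · refine ⟨x :: y :: L, fun z hz => by simp_all, by simp, ?_⟩
    simp only [pathLength_cons, dist_comm y x]
    ring
  · obtain ⟨A, B, rfl⟩ := List.append_of_mem hyL
    exact ⟨A ++ y :: x :: y :: B, fun z hz => by simp at hz ⊢; tauto, by simp,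
      pathLength_detour a x y A B⟩

noncomputable def edgeLength : Sym2 X → ℝ :=
  Sym2.lift ⟨fun x y => dist x y, fun x y => dist_comm x y⟩

@[simp] theorem edgeLength_mk (x y : X) : edgeLength s(x, y) = dist x y := rfl

theorem edgeLength_nonneg (e : Sym2 X) : 0 ≤ edgeLength e := by
  induction e using Sym2.inductionOn with
  | hf x y => exact dist_nonneg

theorem treeWeight_eq_sum [Fintype X] (G : SimpleGraph X) [Fintype G.edgeSet] :
    treeWeight G = ∑ e ∈ G.edgeFinset, edgeLength e := by
  rw [treeWeight, ← SimpleGraph.coe_edgeFinset, finsum_mem_coe_finset]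
  rfl

variable [Fintype X] [DecidableEq X] {T : SimpleGraph X} [Fintype T.edgeSet]

/-- Grow `s` along an edge `yx` leaving it, splicing the detour `y, x, y` into the path. -/
theorem exists_covering_path_extending (hT : T.Connected) {r : X} (s : Finset X) (hr : r ∈ s)
    (L : List X) (hL : ∀ z ∈ s, z ∈ r :: L) :
    ∃ L' : List X, (∀ z, z ∈ r :: L') ∧
      pathLength r L' ≤ pathLength r L + 2 * ∑ e ∈ T.edgeFinset \ s.sym2, edgeLength e := by
  by_cases hs : ∀ z, z ∈ s
  · exact ⟨L, fun z => hL z (hs z), by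
      linarith [sum_nonneg fun e (_ : e ∈ T.edgeFinset \ s.sym2) => edgeLength_nonneg e]⟩
  obtain ⟨z, hz⟩ := not_forall.1 hs
  obtain ⟨y, x, hyx, hy, hx⟩ : ∃ y x, T.Adj y x ∧ y ∈ s ∧ x ∉ s := by
    obtain ⟨w⟩ := hT.preconnected r z
    obtain ⟨d, -, hd⟩ := w.exists_boundary_dart (s : Set X) hr hz
    exact ⟨d.fst, d.snd, d.adj, hd⟩
  obtain ⟨L₁, hsub, hxL₁, hlen⟩ := exists_detour (hL y hy) x
  obtain ⟨L', hcov, hle⟩ := exists_covering_path_extending hT (insert x s)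
    (mem_insert_of_mem hr) L₁ fun z hz => by
      rcases mem_insert.1 hz with rfl | hz
      · exact List.mem_cons_of_mem _ hxL₁
      · exact hsub (hL z hz)
  refine ⟨L', hcov, ?_⟩
  have hedge : s(y, x) ∈ T.edgeFinset \ s.sym2 := by
    simp [hyx, hx]
  have hshrink : T.edgeFinset \ (insert x s).sym2 ⊆ (T.edgeFinset \ s.sym2).erase s(y, x) := by
    intro e he
    simp only [mem_sdiff, mem_erase] at he ⊢
    refine ⟨?_, he.1, fun h => he.2 (sym2_mono (subset_insert x s) h)⟩
    rintro rfl
    exact he.2 (mk_mem_sym2_iff.2 ⟨mem_insert_of_mem hy, mem_insert_self x s⟩)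
  have hsum := sum_le_sum_of_subset_of_nonneg hshrink fun e _ _ => edgeLength_nonneg e
  have hsplit := add_sum_erase _ edgeLength hedge
  rw [edgeLength_mk, dist_comm] at hsplit
  linarith
termination_by sᶜ.card
decreasing_by exact card_lt_card (compl_ssubset_compl.2 (ssubset_insert hx))

theorem exists_nodup_pathLength_le (hT : T.Connected) (r : X) :
    ∃ l : List X, l.Nodup ∧ (∀ x, x ∈ l ↔ x ≠ r) ∧ pathLength r l ≤ 2 * treeWeight T := by
  obtain ⟨L, hcov, hlen⟩ := exists_covering_path_extending hT {r} (mem_singleton_self r) []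
    (by simp)
  refine ⟨(L.filter (· ≠ r)).dedup, List.nodup_dedup _, fun x => ?_, ?_⟩
  · simp only [List.mem_dedup, List.mem_filter, decide_eq_true_eq, and_iff_right_iff_imp]
    exact fun hx => (List.mem_cons.1 (hcov x)).resolve_left hx
  · have hshortcut : (L.filter (· ≠ r)).dedup <+ L :=
      (List.dedup_sublist _).trans List.filter_sublist
    have hedges : ∑ e ∈ T.edgeFinset \ ({r} : Finset X).sym2, edgeLength e ≤ treeWeight T := by
      rw [treeWeight_eq_sum]
      exact sum_le_sum_of_subset_of_nonneg sdiff_subset fun e _ _ => edgeLength_nonneg e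
    simp only [pathLength_nil, zero_add] at hlen
    linarith [pathLength_mono hshortcut r]

end Metric

section ParentGraph

def parentGraph (r : X) (P : X → X) : SimpleGraph X :=
  SimpleGraph.fromRel fun x y => x ≠ r ∧ P x = y

variable {r : X} {P : X → X} {rk : X → ℕ}

theorem parentGraph_adj_parent (hP : ∀ x, x ≠ r → rk (P x) < rk x) {x : X} (hx : x ≠ r) :
    (parentGraph r P).Adj x (P x) :=
  (SimpleGraph.fromRel_adj _ _ _).2
    ⟨fun h => (hP x hx).ne (congrArg rk h).symm, Or.inl ⟨hx, rfl⟩⟩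

theorem parentGraph_reachable_root (hP : ∀ x, x ≠ r → rk (P x) < rk x) (x : X) :
    (parentGraph r P).Reachable x r := by
  induction x using (measure rk).wf.induction with
  | h x ih =>
    by_cases hx : x = r
    · exact hx ▸ .refl _
    · exact (parentGraph_adj_parent hP hx).reachable.trans (ih (P x) (hP x hx))

theorem parentGraph_connected (hP : ∀ x, x ≠ r → rk (P x) < rk x) :
    (parentGraph r P).Connected :=
  haveI : Nonempty X := ⟨r⟩
  ⟨fun x y => (parentGraph_reachable_root hP x).trans (parentGraph_reachable_root hP y).symm⟩

variable [Fintype X] [DecidableEq X]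

theorem parentGraph_edgeSet (hP : ∀ x, x ≠ r → rk (P x) < rk x) :
    (parentGraph r P).edgeSet = ↑((univ.erase r).image fun x => s(x, P x)) := by
  ext e
  simp only [coe_image, coe_erase, coe_univ, Set.mem_image, Set.mem_sdiff, Set.mem_univ,
    Set.mem_singleton_iff, true_and]
  constructor
  · induction e using Sym2.ind with
    | h a b =>
      rintro ⟨-, ⟨ha, hab⟩ | ⟨hb, hba⟩⟩
      exacts [⟨a, ha, hab ▸ rfl⟩, ⟨b, hb, hba ▸ Sym2.eq_swap⟩]
  · rintro ⟨x, hx, rfl⟩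
    exact parentGraph_adj_parent hP hx

theorem injOn_mk_parent (hP : ∀ x, x ≠ r → rk (P x) < rk x) :
    Set.InjOn (fun x => s(x, P x)) ↑(univ.erase r) := by
  intro x hx y hy hxy
  simp only [coe_erase, coe_univ, Set.mem_sdiff, Set.mem_univ, Set.mem_singleton_iff, true_and]
    at hx hy
  rcases Sym2.eq_iff.1 hxy with ⟨h, -⟩ | ⟨h₁, h₂⟩
  · exact h
  · have hx' := hP x hx
    have hy' := hP y hy
    rw [h₂] at hx'
    rw [← h₁] at hy'
    omega

theorem parentGraph_isTree (hP : ∀ x, x ≠ r → rk (P x) < rk x) : (parentGraph r P).IsTree := by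
  refine SimpleGraph.isTree_iff_connected_and_card.2 ⟨parentGraph_connected hP, ?_⟩
  have : Nonempty X := ⟨r⟩
  simp only [parentGraph_edgeSet hP, Nat.card_eq_fintype_card, SetLike.coe_sort_coe,
    Fintype.card_coe]
  rw [card_image_of_injOn (injOn_mk_parent hP), card_erase_of_mem (mem_univ r), card_univ]
  have := Fintype.card_pos (α := X)
  omega

variable [MetricSpace X]

theorem treeWeight_parentGraph (hP : ∀ x, x ≠ r → rk (P x) < rk x) :
    treeWeight (parentGraph r P) = ∑ x ∈ univ.erase r, dist x (P x) := by
  rw [treeWeight, parentGraph_edgeSet hP, finsum_mem_coe_finset, sum_image (injOn_mk_parent hP)]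
  rfl

end ParentGraph

section LayeredParent

def residueClass (ℓ : X → ℤ) (m : ℤ) (l : List X) (c : ℤ) : List X :=
  l.filter fun z => ℓ z % m = c

variable {r : X} {ℓ : X → ℤ} {m : ℤ} {l : List X}

theorem mem_residueClass_self {x : X} (hx : x ∈ l) : x ∈ residueClass ℓ m l (ℓ x % m) :=
  List.mem_filter.2 ⟨hx, by simp⟩

variable [DecidableEq X]

def classPred (r : X) (ℓ : X → ℤ) (m : ℤ) (l : List X) (x : X) : X :=
  pathPred r (residueClass ℓ m l (ℓ x % m)) x

def layeredParent (r : X) (ℓ : X → ℤ) (m : ℤ) (l : List X) (x : X) : X :=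
  if ℓ (classPred r ℓ m l x) = ℓ x then classPred r ℓ m l x else r

theorem layeredParent_eq_root_or_layer_eq (x : X) :
    layeredParent r ℓ m l x = r ∨ ℓ (layeredParent r ℓ m l x) = ℓ x := by
  unfold layeredParent
  split_ifs with h
  exacts [.inr h, .inl rfl]

theorem eq_root_or_layer_eq_of_adj {x y : X}
    (h : (parentGraph r (layeredParent r ℓ m l)).Adj x y) : x = r ∨ y = r ∨ ℓ x = ℓ y := by
  rcases ((SimpleGraph.fromRel_adj _ _ _).1 h).2 with ⟨-, rfl⟩ | ⟨-, rfl⟩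
  · rcases layeredParent_eq_root_or_layer_eq (r := r) (ℓ := ℓ) (m := m) (l := l) x with h | h
      <;> simp [h]
  · rcases layeredParent_eq_root_or_layer_eq (r := r) (ℓ := ℓ) (m := m) (l := l) y with h | h
      <;> simp [h]

theorem classPred_eq_root_or_mem {x : X} (hx : x ∈ l) :
    classPred r ℓ m l x = r ∨ classPred r ℓ m l x ∈ residueClass ℓ m l (ℓ x % m) :=
  List.mem_cons.1 ((pathPred_pair_sublist (mem_residueClass_self hx)).subset List.mem_cons_self)

theorem classPred_pair_sublist {x : X} (hx : x ∈ l) :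
    [classPred r ℓ m l x, x] <+ r :: l :=
  (pathPred_pair_sublist (mem_residueClass_self hx)).trans (List.filter_sublist.cons_cons r)

theorem idxOf_layeredParent_lt (hl : (r :: l).Nodup) {x : X} (hx : x ∈ l) :
    (r :: l).idxOf (layeredParent r ℓ m l x) < (r :: l).idxOf x := by
  have hxr : x ≠ r := ne_of_mem_of_not_mem hx (List.nodup_cons.1 hl).1
  unfold layeredParent
  split_ifs
  · exact hl.idxOf_lt_idxOf_of_pair_sublist (classPred_pair_sublist hx)
  · rw [List.idxOf_cons_self, List.idxOf_cons_ne _ hxr.symm]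
    exact Nat.succ_pos _

end LayeredParent

section Layers

variable [MetricSpace X]

def IsLayering (r : X) (τ r0 D : ℝ) (ℓ : X → ℤ) : Prop :=
  ∀ x, x ≠ r → τ ^ ℓ x * r0 ≤ dist x r ∧ dist x r ≤ D * (τ ^ ℓ x * r0)

theorem dist_root_le_of_layer_ne {r : X} {τ r0 D : ℝ} {ℓ : X → ℤ} (hℓ : IsLayering r τ r0 D ℓ)
    (hτ : 1 < τ) (hr0 : 0 < r0) (hD : 0 ≤ D) {m : ℤ} (hm : 1 + D ≤ τ ^ m) {x y : X}
    (hx : x ≠ r) (hy : y ≠ r) (hxy : ℓ x ≠ ℓ y) (hmod : ℓ x % m = ℓ y % m) :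
    dist x r ≤ (1 + D) * dist x y := by
  have hgap : ∀ i j : ℤ, i + m ≤ j → (1 + D) * (τ ^ i * r0) ≤ τ ^ j * r0 := fun i j hij =>
    calc (1 + D) * (τ ^ i * r0) ≤ τ ^ m * (τ ^ i * r0) := by gcongr
      _ = τ ^ (i + m) * r0 := by rw [zpow_add₀ (by positivity)]; ring
      _ ≤ τ ^ j * r0 := by gcongr; exact hτ.le
  obtain ⟨hx₁, hx₂⟩ := hℓ x hx
  obtain ⟨hy₁, hy₂⟩ := hℓ y hy
  have hxyr := dist_triangle x y r
  have hyxr := dist_triangle y x r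
  rw [dist_comm y x] at hyxr
  -- If `ℓ x + m ≤ ℓ y`: `(1 + D) d(x, r) ≤ D d(y, r) ≤ D (d(x, y) + d(x, r))`.
  -- If `ℓ y + m ≤ ℓ x`: `(1 + D) d(x, r) ≤ (1 + D) d(x, y) + (1 + D) d(y, r)`
  --   `≤ (1 + D) d(x, y) + D d(x, r)`.
  rcases Int.add_le_or_add_le_of_dvd_sub (Int.ModEq.dvd hmod.symm) hxy with h | h
  · nlinarith [hgap _ _ h, dist_nonneg (x := x) (y := y)]
  · nlinarith [hgap _ _ h]

variable [DecidableEq X] {r : X} {ℓ : X → ℤ} {m : ℤ} {l : List X}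

theorem dist_layeredParent_le {τ r0 D : ℝ} (hℓ : IsLayering r τ r0 D ℓ) (hτ : 1 < τ)
    (hr0 : 0 < r0) (hD : 0 ≤ D) (hm : 1 + D ≤ τ ^ m) (hl : (r :: l).Nodup) {x : X}
    (hx : x ∈ l) :
    dist x (layeredParent r ℓ m l x) ≤ (1 + D) * dist (classPred r ℓ m l x) x := by
  have hxr : x ≠ r := ne_of_mem_of_not_mem hx (List.nodup_cons.1 hl).1
  unfold layeredParent
  split_ifs with h
  · rw [dist_comm]
    exact le_mul_of_one_le_left dist_nonneg (by linarith)
  · rcases classPred_eq_root_or_mem (r := r) hx with hy | hy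
    · rw [hy, dist_comm]
      exact le_mul_of_one_le_left dist_nonneg (by linarith)
    · obtain ⟨hyl, hym⟩ := List.mem_filter.1 hy
      have hyr : classPred r ℓ m l x ≠ r := ne_of_mem_of_not_mem hyl (List.nodup_cons.1 hl).1
      rw [dist_comm _ x]
      exact dist_root_le_of_layer_ne hℓ hτ hr0 hD hm hxr hyr (Ne.symm h)
        (of_decide_eq_true hym).symm

theorem sum_residueClass_dist_layeredParent_le {τ r0 D : ℝ} (hℓ : IsLayering r τ r0 D ℓ)
    (hτ : 1 < τ) (hr0 : 0 < r0) (hD : 0 ≤ D) (hm : 1 + D ≤ τ ^ m) (hl : (r :: l).Nodup)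
    (c : ℤ) :
    ∑ x ∈ (residueClass ℓ m l c).toFinset, dist x (layeredParent r ℓ m l x) ≤
      (1 + D) * pathLength r l := by
  have hcl : (residueClass ℓ m l c).Nodup := hl.of_cons.filter _
  calc ∑ x ∈ (residueClass ℓ m l c).toFinset, dist x (layeredParent r ℓ m l x)
      ≤ ∑ x ∈ (residueClass ℓ m l c).toFinset,
          (1 + D) * dist (pathPred r (residueClass ℓ m l c) x) x := by
        refine sum_le_sum fun x hx => ?_
        obtain ⟨hxl, hxc⟩ := List.mem_filter.1 (List.mem_toFinset.1 hx)
        have := dist_layeredParent_le hℓ hτ hr0 hD hm hl hxl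
        rwa [classPred, of_decide_eq_true hxc] at this
    _ = (1 + D) * pathLength r (residueClass ℓ m l c) := by
        rw [← mul_sum, sum_dist_pathPred hcl]
    _ ≤ (1 + D) * pathLength r l := by
        gcongr
        exact pathLength_mono List.filter_sublist r

theorem sum_dist_layeredParent_le {τ r0 D : ℝ} (hℓ : IsLayering r τ r0 D ℓ)
    (hτ : 1 < τ) (hr0 : 0 < r0) (hD : 0 ≤ D) (hm0 : 0 < m) (hm : 1 + D ≤ τ ^ m)
    (hl : (r :: l).Nodup) :
    ∑ x ∈ l.toFinset, dist x (layeredParent r ℓ m l x) ≤ m * ((1 + D) * pathLength r l) := by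
  have hres : ∀ x ∈ l.toFinset, ℓ x % m ∈ Ico 0 m := fun x _ =>
    mem_Ico.2 ⟨Int.emod_nonneg _ hm0.ne', Int.emod_lt_of_pos _ hm0⟩
  rw [← sum_fiberwise_of_maps_to hres]
  calc ∑ c ∈ Ico 0 m, ∑ x ∈ l.toFinset with ℓ x % m = c, dist x (layeredParent r ℓ m l x)
      ≤ ∑ _c ∈ Ico 0 m, (1 + D) * pathLength r l := sum_le_sum fun c _ => by
        simpa [residueClass, List.toFinset_filter] using
          sum_residueClass_dist_layeredParent_le hℓ hτ hr0 hD hm hl c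
    _ = m * ((1 + D) * pathLength r l) := by
        rw [sum_const, Int.card_Ico, sub_zero, nsmul_eq_mul, ← Int.cast_natCast,
          Int.toNat_of_nonneg hm0.le]

end Layers
end LayeredSpanningTree

open LayeredSpanningTree Finset in
theorem layered_spanning_tree_general {X : Type*} [MetricSpace X] [Fintype X] (r : X)
    (τ r0 D : ℝ) (hτ : 1 < τ) (hr0 : 0 < r0) (hD : 1 ≤ D)
    (ℓ : X → ℤ)
    (hℓ : ∀ x : X, x ≠ r →
      τ ^ (ℓ x) * r0 ≤ dist x r ∧ dist x r ≤ D * (τ ^ (ℓ x) * r0))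
    (T : SimpleGraph X) (hTc : T.Connected) :
    ∃ TL : SimpleGraph X, TL.Connected ∧ TL.IsAcyclic ∧
      (∀ x y : X, TL.Adj x y → x = r ∨ y = r ∨ ℓ x = ℓ y) ∧
      treeWeight TL ≤ 2 * (⌈Real.logb τ (1 + D)⌉ : ℝ) * (1 + D) * treeWeight T := by
  classical
  set m := ⌈Real.logb τ (1 + D)⌉
  have hm0 : 0 < m := Int.ceil_pos.2 (Real.logb_pos hτ (by linarith))
  have hm : 1 + D ≤ τ ^ m := Real.le_zpow_ceil_logb hτ (by linarith)
  obtain ⟨l, hl, hmem, hlen⟩ := exists_nodup_pathLength_le hTc r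
  have hrl : (r :: l).Nodup := List.nodup_cons.2 ⟨fun h => (hmem r).1 h rfl, hl⟩
  have hrank : ∀ x, x ≠ r → (r :: l).idxOf (layeredParent r ℓ m l x) < (r :: l).idxOf x :=
    fun x hx => idxOf_layeredParent_lt hrl ((hmem x).2 hx)
  have htree := parentGraph_isTree (rk := fun x => (r :: l).idxOf x) hrank
  refine ⟨_, htree.connected, htree.isAcyclic, fun x y => eq_root_or_layer_eq_of_adj, ?_⟩
  have hsupp : univ.erase r = l.toFinset := by ext x; simp [hmem]
  rw [treeWeight_parentGraph (rk := fun x => (r :: l).idxOf x) hrank, hsupp]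
  calc ∑ x ∈ l.toFinset, dist x (layeredParent r ℓ m l x)
      ≤ m * ((1 + D) * pathLength r l) :=
        sum_dist_layeredParent_le hℓ hτ hr0 (by linarith) hm0 hm hrl
    _ ≤ m * ((1 + D) * (2 * treeWeight T)) := by gcongr
    _ = 2 * m * (1 + D) * treeWeight T := by ring

/-- Lemma `a-la-jia`: given a layer function `ℓ` with
`τ^(ℓ x) * r0 ≤ d(x,r) ≤ D * τ^(ℓ x) * r0` for all `x ≠ r`, every spanning tree `T` of
`X` admits a layered spanning tree `TL` (every edge is incident to the root `r` or joins
two vertices of the same layer) whose weight is at most `2 * ⌈log_τ (1+D)⌉ * (1+D)`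
times the weight of `T`. -/
theorem layered_spanning_tree {X : Type*} [MetricSpace X] [Fintype X] (r : X)
    (τ r0 D : ℝ) (hτ : 1 < τ) (hr0 : 0 < r0) (hD : 1 ≤ D)
    (ℓ : X → ℤ)
    (hℓ : ∀ x : X, x ≠ r →
      τ ^ (ℓ x) * r0 ≤ dist x r ∧ dist x r ≤ D * (τ ^ (ℓ x) * r0))
    (T : SimpleGraph X) (hTc : T.Connected) (hTa : T.IsAcyclic) :
    ∃ TL : SimpleGraph X, TL.Connected ∧ TL.IsAcyclic ∧
      (∀ x y : X, TL.Adj x y → x = r ∨ y = r ∨ ℓ x = ℓ y) ∧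
      treeWeight TL ≤ 2 * (⌈Real.logb τ (1 + D)⌉ : ℝ) * (1 + D) * treeWeight T :=
  layered_spanning_tree_general r τ r0 D hτ hr0 hD ℓ hℓ T hTc
end

section
/- Let (V,d) be a metric space, let τ > 1 be real, let η and j be natural numbers, let r_0 > 0, and set c = τ·2^{-η}/(τ−1) and C(η,τ) = (1 + (τ/(τ−1))²·2^{3−η})·τ. Let v = v_0, v_1, …, v_m = u be points of V and l_1 < ⋯ < l_m ≤ j+1 strictly increasing natural numbers, and let v* = w_0, w_1, …, w_p = u* be points of V and l'_1 < ⋯ < l'_p ≤ j+1 strictly increasing natural numbers. Suppose d(v, v*) ≥ τ^j·r_0. Then Σ_{i=1}^{m} 2c·τ^{l_i}·r_0 + (1 + 4c)·τ^{j+1}·r_0 + Σ_{i=1}^{p} 2c·τ^{l'_i}·r_0 ≤ C(η,τ)·d(v, v*). -/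
/-!
Every weight `2c·τ^l·r₀` on either side occurs at a distinct level `l ≤ j + 1`, so each side is
bounded by a geometric series: it weighs at most `2c·q·τ^(j+1)·r₀`, where `q = τ/(τ-1)`.
Writing `c = q·2^(-η)`, the total is at most `(1 + 4c(q + 1))·τ^(j+1)·r₀`, and `q ≥ 1` gives
`4c(q + 1) ≤ 8c·q = q²·2^(3-η)`, so the total is at most `C·τ^j·r₀ ≤ C·d(v, v*)`.
-/

open Finset

lemma geom_sum_le_div_sub_one_mul_pow {τ : ℝ} (hτ : 1 < τ) (n : ℕ) :
    ∑ k ∈ range (n + 1), τ ^ k ≤ τ / (τ - 1) * τ ^ n := by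
  have hτ1 : 0 < τ - 1 := sub_pos.mpr hτ
  rw [geom_sum_eq hτ.ne', div_mul_eq_mul_div, ← pow_succ']
  gcongr
  linarith

lemma sum_pow_le_of_injOn {ι : Type*} {τ : ℝ} (hτ : 1 < τ) {s : Finset ι} {f : ι → ℕ} {n : ℕ}
    (hf : Set.InjOn f s) (hle : ∀ i ∈ s, f i ≤ n) :
    ∑ i ∈ s, τ ^ f i ≤ τ / (τ - 1) * τ ^ n :=
  calc ∑ i ∈ s, τ ^ f i = ∑ k ∈ s.image f, τ ^ k := (sum_image hf).symm
    _ ≤ ∑ k ∈ range (n + 1), τ ^ k := by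
      refine sum_le_sum_of_subset_of_nonneg ?_ fun k _ _ => by positivity
      simp only [subset_iff, mem_image, mem_range]
      rintro _ ⟨i, hi, rfl⟩
      exact Nat.lt_succ_of_le (hle i hi)
    _ ≤ τ / (τ - 1) * τ ^ n := geom_sum_le_div_sub_one_mul_pow hτ n

lemma sum_Icc_weight_le_of_strictMonoOn {τ : ℝ} (hτ : 1 < τ) {w r : ℝ} (hw : 0 ≤ w)
    (hr : 0 ≤ r) {m n : ℕ} {l : ℕ → ℕ} (hl : StrictMonoOn l (Set.Icc 1 m))
    (hle : ∀ i, 1 ≤ i → i ≤ m → l i ≤ n) :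
    ∑ i ∈ Icc 1 m, w * τ ^ l i * r ≤ w * (τ / (τ - 1) * τ ^ n) * r := by
  rw [← sum_mul, ← mul_sum]
  have hinj : Set.InjOn l (Icc 1 m : Finset ℕ) := by simpa using hl.injOn
  gcongr
  exact sum_pow_le_of_injOn hτ hinj fun i hi => hle i (mem_Icc.mp hi).1 (mem_Icc.mp hi).2

theorem pseudospanner_stretch_general {V : Type*} [MetricSpace V]
    (τ : ℝ) (hτ : 1 < τ) (η j : ℕ) (r0 : ℝ) (hr0 : 0 < r0)
    (c C : ℝ)
    (hc : c = τ * (2 : ℝ) ^ (-(η : ℤ)) / (τ - 1))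
    (hC : C = (1 + (τ / (τ - 1)) ^ 2 * (2 : ℝ) ^ ((3 : ℤ) - (η : ℤ))) * τ)
    (m p : ℕ) (v vstar : V)
    (l l' : ℕ → ℕ)
    (hl : StrictMonoOn l (Set.Icc 1 m)) (hlle : ∀ i, 1 ≤ i → i ≤ m → l i ≤ j + 1)
    (hl' : StrictMonoOn l' (Set.Icc 1 p)) (hl'le : ∀ i, 1 ≤ i → i ≤ p → l' i ≤ j + 1)
    (hdist : τ ^ j * r0 ≤ dist v vstar) :
    (∑ i ∈ Finset.Icc 1 m, 2 * c * τ ^ (l i) * r0)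
        + (1 + 4 * c) * τ ^ (j + 1) * r0
        + (∑ i ∈ Finset.Icc 1 p, 2 * c * τ ^ (l' i) * r0)
      ≤ C * dist v vstar := by
  have hτ1 : 0 < τ - 1 := sub_pos.mpr hτ
  have hc0 : 0 ≤ 2 * c := by rw [hc]; positivity
  have hside := sum_Icc_weight_le_of_strictMonoOn hτ hc0 hr0.le hl hlle
  have hside' := sum_Icc_weight_le_of_strictMonoOn hτ hc0 hr0.le hl' hl'le
  set q := τ / (τ - 1)
  set A : ℝ := 2 ^ (-(η : ℤ))
  have hq : 1 ≤ q := (one_le_div hτ1).mpr (by linarith)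
  have hA : 0 < A := by positivity
  have hcq : c = q * A := by rw [hc]; ring
  have hC' : C = (1 + 8 * A * q ^ 2) * τ := by
    rw [hC, sub_eq_add_neg, zpow_add₀ two_ne_zero]
    ring
  have hcoeff : 4 * c * (q + 1) ≤ 8 * A * q ^ 2 := by
    rw [hcq]
    nlinarith [mul_nonneg (mul_nonneg hA.le (zero_le_one.trans hq)) (sub_nonneg.mpr hq)]
  have hC0 : 0 ≤ C := by rw [hC']; positivity
  calc _ ≤ (1 + 4 * c * (q + 1)) * τ * (τ ^ j * r0) := by
        have : (1 + 4 * c * (q + 1)) * τ * (τ ^ j * r0) = 2 * c * (q * τ ^ (j + 1)) * r0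
            + (1 + 4 * c) * τ ^ (j + 1) * r0 + 2 * c * (q * τ ^ (j + 1)) * r0 := by ring
        linarith
    _ ≤ C * (τ ^ j * r0) := by
      rw [hC']
      gcongr
    _ ≤ C * dist v vstar := mul_le_mul_of_nonneg_left hdist hC0

/-- The stretch guarantee of the pseudospanner (Theorem 3): the total weight of the
pseudospanner path from `v` up to its level-`(j+1)` leader `u` (edges of weight
`2c*τ^(l i)*r0` at strictly increasing levels `l i ≤ j+1`), across the connecting edge
of weight `(1+4c)*τ^(j+1)*r0`, and down from the leader `u*` to `v*`, is at most
`C(η,τ) * d(v,v*)`, provided `d(v,v*) ≥ τ^j * r0`. Here `c = τ*2^(-η)/(τ-1)` and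
`C(η,τ) = (1 + (τ/(τ-1))² * 2^(3-η)) * τ`. -/
theorem pseudospanner_stretch {V : Type*} [MetricSpace V]
    (τ : ℝ) (hτ : 1 < τ) (η j : ℕ) (r0 : ℝ) (hr0 : 0 < r0)
    (c C : ℝ)
    (hc : c = τ * (2 : ℝ) ^ (-(η : ℤ)) / (τ - 1))
    (hC : C = (1 + (τ / (τ - 1)) ^ 2 * (2 : ℝ) ^ ((3 : ℤ) - (η : ℤ))) * τ)
    (m p : ℕ) (v vstar u ustar : V) (vv ww : ℕ → V)
    (hvv0 : vv 0 = v) (hvvm : vv m = u) (hww0 : ww 0 = vstar) (hwwp : ww p = ustar)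
    (l l' : ℕ → ℕ)
    (hl : StrictMonoOn l (Set.Icc 1 m)) (hlle : ∀ i, 1 ≤ i → i ≤ m → l i ≤ j + 1)
    (hl' : StrictMonoOn l' (Set.Icc 1 p)) (hl'le : ∀ i, 1 ≤ i → i ≤ p → l' i ≤ j + 1)
    (hdist : τ ^ j * r0 ≤ dist v vstar) :
    (∑ i ∈ Finset.Icc 1 m, 2 * c * τ ^ (l i) * r0)
        + (1 + 4 * c) * τ ^ (j + 1) * r0
        + (∑ i ∈ Finset.Icc 1 p, 2 * c * τ ^ (l' i) * r0)
      ≤ C * dist v vstar :=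
  pseudospanner_stretch_general τ hτ η j r0 hr0 c C hc hC m p v vstar l l' hl hlle hl' hl'le hdist
end

section
/- Let α be a finite nonempty type, let f : α → α, and let ρ ∈ α satisfy f(ρ) = ρ and: for every v ∈ α there exists k with f^[k](v) = ρ (so f is the parent map of a rooted tree with root ρ). For v ∈ α let sub(v) = {u ∈ α : ∃ k, f^[k](u) = v} denote the subtree of v, and call a node v ≠ ρ 'light' if 2·|sub(v)| ≤ |sub(f(v))|. Then for every v ∈ α, the number of light nodes among the iterates v, f(v), f²(v), … (i.e., the cardinality of {w : w is light and ∃ k, f^[k](v) = w}) is at most ⌈log₂ |α|⌉. -/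
/-!
Every vertex `v` reaches the root, so we may induct on its distance to the root and prove
`2 ^ (number of light ancestors of v) * |sub v| ≤ |α|`. Passing from `v` to its parent `f v`
the subtree never shrinks, and it at least doubles when `v` is light; since `|sub v| ≥ 1`, the
number of light ancestors is at most `log₂ |α|`.
-/

namespace Function

variable {α : Type*} (f : α → α)

def subtree (v : α) : Set α := {u | ∃ k : ℕ, f^[k] u = v}

def ancestors (v : α) : Set α := {w | ∃ k : ℕ, f^[k] v = w}

def IsLight (ρ w : α) : Prop := w ≠ ρ ∧ 2 * (subtree f w).ncard ≤ (subtree f (f w)).ncard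

theorem subtree_subset_subtree_apply (v : α) : subtree f v ⊆ subtree f (f v) := by
  rintro u ⟨k, rfl⟩
  exact ⟨k + 1, iterate_succ_apply' f k u⟩

theorem ncard_subtree_pos [Finite α] (v : α) : 0 < (subtree f v).ncard :=
  (Set.ncard_pos (Set.toFinite _)).2 ⟨v, 0, rfl⟩

theorem ancestors_eq_insert (v : α) : ancestors f v = insert v (ancestors f (f v)) := by
  ext w
  constructor
  · rintro ⟨_ | k, rfl⟩
    · exact Or.inl rfl
    · exact Or.inr ⟨k, (iterate_succ_apply f k v).symm⟩
  · rintro (rfl | ⟨k, rfl⟩)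
    · exact ⟨0, rfl⟩
    · exact ⟨k + 1, iterate_succ_apply f k v⟩

theorem ancestors_of_isFixedPt {ρ : α} (hρ : f ρ = ρ) : ancestors f ρ = {ρ} := by
  ext w
  constructor
  · rintro ⟨k, rfl⟩
    exact iterate_fixed hρ k
  · rintro rfl
    exact ⟨0, rfl⟩

theorem two_pow_ncard_light_ancestors_mul_ncard_subtree_le [Finite α] {ρ : α} (hρ : f ρ = ρ)
    {n : ℕ} {v : α} (hv : f^[n] v = ρ) :
    2 ^ ({w | IsLight f ρ w} ∩ ancestors f v).ncard * (subtree f v).ncard ≤ Nat.card α := by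
  induction n generalizing v with
  | zero =>
    obtain rfl : v = ρ := hv
    have hnone : {w | IsLight f v w} ∩ ancestors f v = ∅ := by
      rw [ancestors_of_isFixedPt f hρ, Set.inter_singleton_eq_empty]
      exact fun h => h.1 rfl
    simpa [hnone] using Set.ncard_le_card (subtree f v)
  | succ n ih =>
    have ih := ih (v := f v) (by rwa [← iterate_succ_apply])
    rw [ancestors_eq_insert]
    set L := {w | IsLight f ρ w} ∩ ancestors f (f v)
    by_cases hlight : IsLight f ρ v
    · rw [Set.inter_insert_of_mem (s := {w | IsLight f ρ w}) hlight]
      calc 2 ^ (insert v L).ncard * (subtree f v).ncard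
          ≤ 2 ^ (L.ncard + 1) * (subtree f v).ncard := by
            gcongr
            · norm_num
            · exact Set.ncard_insert_le _ _
        _ = 2 ^ L.ncard * (2 * (subtree f v).ncard) := by ring
        _ ≤ 2 ^ L.ncard * (subtree f (f v)).ncard := Nat.mul_le_mul_left _ hlight.2
        _ ≤ Nat.card α := ih
    · rw [Set.inter_insert_of_notMem (s := {w | IsLight f ρ w}) hlight]
      exact le_trans
        (Nat.mul_le_mul_left _ (Set.ncard_le_ncard (subtree_subset_subtree_apply f v))) ih

end Function

open Function in
theorem heavy_path_light_count_general {α : Type*} [Fintype α]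
    (f : α → α) (ρ : α) (hroot : f ρ = ρ) (hreach : ∀ v : α, ∃ k : ℕ, f^[k] v = ρ) :
    ∀ v : α,
      {w : α | (w ≠ ρ ∧
          2 * {u : α | ∃ k : ℕ, f^[k] u = w}.ncard
            ≤ {u : α | ∃ k : ℕ, f^[k] u = f w}.ncard) ∧
        ∃ k : ℕ, f^[k] v = w}.ncard
      ≤ Nat.clog 2 (Fintype.card α) := by
  intro v
  obtain ⟨n, hn⟩ := hreach v
  change ({w | IsLight f ρ w} ∩ ancestors f v).ncard ≤ _
  have hpow : 2 ^ ({w | IsLight f ρ w} ∩ ancestors f v).ncard ≤ Fintype.card α := by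
    rw [← Nat.card_eq_fintype_card]
    exact (Nat.le_mul_of_pos_right _ (ncard_subtree_pos f v)).trans
      (two_pow_ncard_light_ancestors_mul_ncard_subtree_le f hroot hn)
  exact (Nat.clog_pow 2 _ one_lt_two).symm.le.trans (Nat.clog_mono_right 2 hpow)

/-- The counting argument of the heavy-path decomposition lemma: in a rooted tree on a
finite vertex set `α` given by a parent map `f` with root `ρ` (so `f ρ = ρ` and every
vertex reaches `ρ` by iterating `f`), calling a node `w ≠ ρ` light if
`2 * |sub w| ≤ |sub (f w)|` (where `sub w` is the subtree of `w`), every vertex `v` has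
at most `⌈log₂ |α|⌉` light nodes among its iterated ancestors `v, f v, f² v, …`. -/
theorem heavy_path_light_count {α : Type*} [Fintype α] [Nonempty α]
    (f : α → α) (ρ : α) (hroot : f ρ = ρ) (hreach : ∀ v : α, ∃ k : ℕ, f^[k] v = ρ) :
    ∀ v : α,
      {w : α | (w ≠ ρ ∧
          2 * {u : α | ∃ k : ℕ, f^[k] u = w}.ncard
            ≤ {u : α | ∃ k : ℕ, f^[k] u = f w}.ncard) ∧
        ∃ k : ℕ, f^[k] v = w}.ncard
      ≤ Nat.clog 2 (Fintype.card α) :=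
  heavy_path_light_count_general f ρ hroot hreach
end
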